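/- The infinite lower-triangular matrices F and G with entries F_{k,m}(a) = (1 - a q^{2m}) (q^{-k}; q)_m q^{k m} / (a q^{k+1}; q)_m and G_{k,m}(a) = (q^{-k}; q)_m (a q^m; q)_k q^m / ((1 - a q^m) (q; q)_m (q; q)_k) are inverse to each other; that is, for all nonnegative integers N and j with j ≤ N, the sum over k from j to N of F_{N,k}(a) · G_{k,j}(a) equals 1 if j = N and 0 otherwise. -/

import Mathlib

/-!
Write `F_{N,k} G_{k,j} = (1 - a q^{2k}) t_k`. The term `t_k` is q-hypergeometric in `k`, and for
`j < N` the function `T k = t_k (q^k - q^j) (a q^{N+k} - 1)` satisfies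
`T (k+1) - T k = (q^N - q^j) (1 - a q^{2k}) t_k`, which reduces to the polynomial identity
`(q^N - q^k)(1 - a q^{j+k}) - (q^k - q^j)(a q^{N+k} - 1) = (q^N - q^j)(1 - a q^{2k})`.
So `(q^N - q^j) ∑ F_{N,k} G_{k,j} = T (N+1) - T j`, and both ends vanish:
`(q^{-N}; q)_{N+1} = 0` and `q^j - q^j = 0`. On the diagonal the single term is `1` because
`(q^{-N}; q)_N^2 q^{N^2+N} = (q; q)_N^2`.
-/

open Finset

/-- The finite q-shifted factorial `(a; q)_n`. -/
noncomputable def qp (q a : ℂ) (n : ℕ) : ℂ := ∏ i ∈ Finset.range n, (1 - a * q ^ i)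

lemma qp_succ (q x : ℂ) (n : ℕ) : qp q x (n + 1) = qp q x n * (1 - x * q ^ n) :=
  prod_range_succ _ n

lemma qp_mul_one_sub (q x : ℂ) (n : ℕ) :
    qp q x n * (1 - x * q ^ n) = (1 - x) * qp q (x * q) n := by
  rw [← qp_succ, qp, prod_range_succ', pow_zero, mul_one, mul_comm]
  simp only [qp, pow_succ', mul_assoc]

lemma qp_ne_zero {q x : ℂ} {n : ℕ} (h : ∀ i < n, x * q ^ i ≠ 1) : qp q x n ≠ 0 :=
  prod_ne_zero_iff.mpr fun i hi => sub_ne_zero.mpr (h i (mem_range.mp hi)).symm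

lemma qp_mul_pow_ne_zero {q a : ℂ} (ha : ∀ m : ℕ, a * q ^ m ≠ 1) (m n : ℕ) :
    qp q (a * q ^ m) n ≠ 0 :=
  qp_ne_zero fun i _ => by rw [mul_assoc, ← pow_add]; exact ha (m + i)

lemma qp_self_ne_zero {q : ℂ} (hq : ∀ i : ℕ, q ^ (i + 1) ≠ 1) (n : ℕ) : qp q q n ≠ 0 :=
  qp_ne_zero fun i _ => by rw [← pow_succ']; exact hq i

lemma qp_inv_pow_succ {q : ℂ} (hq0 : q ≠ 0) (N : ℕ) : qp q (q ^ N)⁻¹ (N + 1) = 0 :=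
  prod_eq_zero (self_mem_range_succ N) (by rw [inv_mul_cancel₀ (pow_ne_zero N hq0), sub_self])

lemma qp_inv_pow_sq_mul {q : ℂ} (hq0 : q ≠ 0) (N : ℕ) :
    qp q (q ^ N)⁻¹ N ^ 2 * q ^ (N * N + N) = qp q q N ^ 2 := by
  induction N with
  | zero => simp [qp]
  | succ N ih =>
    have hshift := qp_mul_one_sub q (q ^ (N + 1))⁻¹ N
    rw [← qp_succ, show (q ^ (N + 1))⁻¹ * q = (q ^ N)⁻¹ by field_simp; ring] at hshift
    rw [hshift, qp_succ, mul_pow _ (1 - q * q ^ N), ← ih]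
    field_simp
    ring

lemma pow_sub_pow_ne_zero {q : ℂ} (hq0 : q ≠ 0) (hq : ∀ i : ℕ, q ^ (i + 1) ≠ 1) {j N : ℕ}
    (h : j < N) : q ^ N - q ^ j ≠ 0 := by
  obtain ⟨d, rfl⟩ := Nat.exists_eq_add_of_lt h
  rw [show q ^ (j + d + 1) - q ^ j = q ^ j * (q ^ (d + 1) - 1) by ring]
  exact mul_ne_zero (pow_ne_zero j hq0) (sub_ne_zero.mpr (hq d))

noncomputable def matF (q a : ℂ) (k m : ℕ) : ℂ :=
  (1 - a * q ^ (2 * m)) * qp q (q ^ k)⁻¹ m * q ^ (k * m) / qp q (a * q ^ (k + 1)) m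

noncomputable def matG (q a : ℂ) (k m : ℕ) : ℂ :=
  qp q (q ^ k)⁻¹ m * qp q (a * q ^ m) k * q ^ m / ((1 - a * q ^ m) * qp q q m * qp q q k)

noncomputable def reducedTerm (q a : ℂ) (N j k : ℕ) : ℂ :=
  qp q (q ^ N)⁻¹ k * q ^ (N * k) / qp q (a * q ^ (N + 1)) k * matG q a k j

lemma matF_mul_matG (q a : ℂ) (N j k : ℕ) :
    matF q a N k * matG q a k j = (1 - a * q ^ (2 * k)) * reducedTerm q a N j k := by
  simp only [matF, reducedTerm]
  ring

lemma reducedTerm_succ {q a : ℂ} (hq0 : q ≠ 0) (ha : ∀ m : ℕ, a * q ^ m ≠ 1)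
    (hq : ∀ i : ℕ, q ^ (i + 1) ≠ 1) (N j k : ℕ) :
    reducedTerm q a N j (k + 1) * ((q ^ (k + 1) - q ^ j) * (a * q ^ (N + (k + 1)) - 1)) =
      reducedTerm q a N j k * ((q ^ N - q ^ k) * (1 - a * q ^ (j + k))) := by
  have hshift : qp q (q ^ (k + 1))⁻¹ j * (q ^ (k + 1) - q ^ j) =
      -(1 - q * q ^ k) * qp q (q ^ k)⁻¹ j := by
    have h := qp_mul_one_sub q (q ^ (k + 1))⁻¹ j
    have hqk1 : q ^ (k + 1) ≠ 0 := pow_ne_zero _ hq0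
    rw [show (q ^ (k + 1))⁻¹ * q = (q ^ k)⁻¹ by field_simp; ring] at h
    rw [show q ^ (k + 1) - q ^ j = q ^ (k + 1) * (1 - (q ^ (k + 1))⁻¹ * q ^ j) by field_simp,
      show -(1 - q * q ^ k) = q ^ (k + 1) * (1 - (q ^ (k + 1))⁻¹) by field_simp; ring]
    linear_combination q ^ (k + 1) * h
  have hX : 1 - a * q ^ (N + 1) * q ^ k ≠ 0 := by
    rw [mul_assoc, ← pow_add]; exact sub_ne_zero.mpr (ha _).symm
  have hY : 1 - q * q ^ k ≠ 0 := by rw [← pow_succ']; exact sub_ne_zero.mpr (hq k).symm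
  have hB := qp_mul_pow_ne_zero ha (N + 1) k
  have hj : 1 - a * q ^ j ≠ 0 := sub_ne_zero.mpr (ha j).symm
  have hE := qp_self_ne_zero hq j
  have hP := qp_self_ne_zero hq k
  simp only [reducedTerm, matG, qp_succ]
  rw [show a * q ^ (N + (k + 1)) - 1 = -(1 - a * q ^ (N + 1) * q ^ k) by ring]
  -- opaque factors keep `field_simp` from rewriting the arguments of `qp` away from `hshift`
  generalize 1 - a * q ^ (N + 1) * q ^ k = X at hX ⊢
  generalize 1 - q * q ^ k = Y at hY hshift ⊢
  generalize qp q (q ^ (k + 1))⁻¹ j = C' at hshift ⊢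
  generalize qp q (q ^ k)⁻¹ j = C at hshift ⊢
  generalize qp q (q ^ N)⁻¹ k = A
  generalize qp q (a * q ^ j) k = D
  field_simp
  linear_combination (-A * (q ^ N - q ^ k) * q ^ (N * (k + 1)) * D * (1 - a * q ^ (j + k))) * hshift

lemma matF_mul_matG_self {q a : ℂ} (hq0 : q ≠ 0) (ha : ∀ m : ℕ, a * q ^ m ≠ 1)
    (hq : ∀ i : ℕ, q ^ (i + 1) ≠ 1) (N : ℕ) : matF q a N N * matG q a N N = 1 := by
  have hshift := qp_mul_one_sub q (a * q ^ N) N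
  rw [mul_assoc, ← pow_add, mul_assoc, ← pow_succ, ← two_mul] at hshift
  have hsq := qp_inv_pow_sq_mul hq0 N
  have hB := qp_mul_pow_ne_zero ha (N + 1) N
  have hN : 1 - a * q ^ N ≠ 0 := sub_ne_zero.mpr (ha N).symm
  have hP := qp_self_ne_zero hq N
  rw [matF, matG, div_mul_div_comm, div_eq_one_iff_eq (by positivity)]
  linear_combination (qp q (a * q ^ N) N * (1 - a * q ^ (2 * N))) * hsq
    + qp q q N ^ 2 * hshift

lemma sum_matF_mul_matG_of_lt {q a : ℂ} (hq0 : q ≠ 0) (ha : ∀ m : ℕ, a * q ^ m ≠ 1)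
    (hq : ∀ i : ℕ, q ^ (i + 1) ≠ 1) {N j : ℕ} (h : j < N) :
    ∑ k ∈ Icc j N, matF q a N k * matG q a k j = 0 := by
  set T : ℕ → ℂ := fun k => reducedTerm q a N j k * ((q ^ k - q ^ j) * (a * q ^ (N + k) - 1))
  have hstep : ∀ k, (q ^ N - q ^ j) * (matF q a N k * matG q a k j) = T (k + 1) - T k := by
    intro k
    simp only [T, reducedTerm_succ hq0 ha hq, matF_mul_matG]
    ring
  have hT_top : T (N + 1) = 0 := by
    simp only [T, reducedTerm, qp_inv_pow_succ hq0, zero_mul, zero_div]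
  have hT_bot : T j = 0 := by simp only [T, sub_self, zero_mul, mul_zero]
  have hsum : (q ^ N - q ^ j) * ∑ k ∈ Icc j N, matF q a N k * matG q a k j = 0 := by
    rw [mul_sum, sum_congr rfl fun k _ => hstep k, sum_Icc_sub h.le, hT_top, hT_bot, sub_zero]
  exact (mul_eq_zero.mp hsum).resolve_left (pow_sub_pow_ne_zero hq0 hq h)

theorem stmt_0_general (q a : ℂ) (hq0 : q ≠ 0)
    (hden1 : ∀ m : ℕ, a * q ^ m ≠ 1)
    (hden2 : ∀ i : ℕ, q ^ (i + 1) ≠ 1) :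
    ∀ N j : ℕ, j ≤ N →
      (∑ k ∈ Finset.Icc j N,
        ((1 - a * q ^ (2 * k)) * qp q ((q ^ N)⁻¹) k * q ^ (N * k)
            / qp q (a * q ^ (N + 1)) k) *
        (qp q ((q ^ k)⁻¹) j * qp q (a * q ^ j) k * q ^ j
            / ((1 - a * q ^ j) * qp q q j * qp q q k)))
      = if j = N then 1 else 0 := by
  intro N j hjN
  change ∑ k ∈ Icc j N, matF q a N k * matG q a k j = if j = N then 1 else 0
  rcases hjN.eq_or_lt with rfl | hlt
  · rw [Icc_self, sum_singleton, if_pos rfl, matF_mul_matG_self hq0 hden1 hden2]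
  · rw [if_neg hlt.ne, sum_matF_mul_matG_of_lt hq0 hden1 hden2 hlt]

/-- The infinite lower-triangular matrices with entries
`F_{k,m}(a) = (1 - a q^{2m}) (q^{-k}; q)_m q^{k m} / (a q^{k+1}; q)_m` and
`G_{k,m}(a) = (q^{-k}; q)_m (a q^m; q)_k q^m / ((1 - a q^m) (q; q)_m (q; q)_k)`
are inverse to each other. -/
theorem stmt_0 (q a : ℂ) (hq : ‖q‖ < 1) (hq0 : q ≠ 0)
    (hden1 : ∀ m : ℕ, a * q ^ m ≠ 1)
    (hden2 : ∀ i : ℕ, q ^ (i + 1) ≠ 1) :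
    ∀ N j : ℕ, j ≤ N →
      (∑ k ∈ Finset.Icc j N,
        ((1 - a * q ^ (2 * k)) * qp q ((q ^ N)⁻¹) k * q ^ (N * k)
            / qp q (a * q ^ (N + 1)) k) *
        (qp q ((q ^ k)⁻¹) j * qp q (a * q ^ j) k * q ^ j
            / ((1 - a * q ^ j) * qp q q j * qp q q k)))
      = if j = N then 1 else 0 :=
  stmt_0_general q a hq0 hden1 hden2
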